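/- For each integer k, the function F_k(ρ) = ‖ρ^(k)‖₁ (the trace norm of the mode-k component of ρ) is a U(1)-asymmetry monotone: if there exists a U(1)-covariant channel mapping ρ to σ, then ‖σ^(k)‖₁ ≤ ‖ρ^(k)‖₁. -/

import Mathlib

open Complex Matrix MeasureTheory
open scoped ComplexOrder

/-- The unitary representation of U(1) on a finite-dimensional Hilbert space with
orthonormal basis indexed by `ι`, where basis vector `i` carries integer charge `c i`:
`U(θ) = Σ_n e^{inθ} Π_n`. -/
noncomputable def Urep {ι : Type*} [Fintype ι] [DecidableEq ι] (c : ι → ℤ) (θ : ℝ) :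
    Matrix ι ι ℂ :=
  Matrix.diagonal fun i => Complex.exp (Complex.I * (c i : ℂ) * (θ : ℂ))

/-- The mode-`k` component of an operator: `A^(k) = Σ_n Π_{n+k} A Π_n`. -/
def modeComp {ι : Type*} [Fintype ι] [DecidableEq ι] (c : ι → ℤ) (k : ℤ)
    (A : Matrix ι ι ℂ) : Matrix ι ι ℂ :=
  Matrix.of fun i j => if c i - c j = k then A i j else 0

/-- The square root of a positive semidefinite matrix (as in Mathlib of December 2024). -/
noncomputable def Matrix.PosSemidef.sqrt {n : Type*} [Fintype n] [DecidableEq n]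
    {A : Matrix n n ℂ} (hA : A.PosSemidef) : Matrix n n ℂ :=
  hA.1.eigenvectorUnitary.1 * diagonal ((↑) ∘ (√·) ∘ hA.1.eigenvalues) *
    (star hA.1.eigenvectorUnitary : Matrix n n ℂ)

/-- The trace norm `‖A‖₁ = tr √(A†A)`. -/
noncomputable def traceNorm {ι : Type*} [Fintype ι] [DecidableEq ι]
    (A : Matrix ι ι ℂ) : ℝ :=
  ((Matrix.posSemidef_conjTranspose_mul_self A).sqrt.trace).re

/-- The Choi matrix of a linear superoperator. -/
noncomputable def choi {ι κ : Type*} [Fintype ι] [DecidableEq ι] [Fintype κ]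
    (E : Matrix ι ι ℂ →ₗ[ℂ] Matrix κ κ ℂ) : Matrix (ι × κ) (ι × κ) ℂ :=
  Matrix.of fun p q => E (Matrix.single p.1 q.1 1) p.2 q.2

/-- A quantum channel: completely positive (positive semidefinite Choi matrix)
and trace preserving. -/
def IsCPTP {ι κ : Type*} [Fintype ι] [DecidableEq ι] [Fintype κ]
    (E : Matrix ι ι ℂ →ₗ[ℂ] Matrix κ κ ℂ) : Prop :=
  (choi E).PosSemidef ∧ ∀ A : Matrix ι ι ℂ, (E A).trace = A.trace

/-- U(1)-covariance of a superoperator with respect to input charges `c`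
and output charges `d`. -/
def IsCovariant {ι κ : Type*} [Fintype ι] [DecidableEq ι] [Fintype κ] [DecidableEq κ]
    (c : ι → ℤ) (d : κ → ℤ) (E : Matrix ι ι ℂ →ₗ[ℂ] Matrix κ κ ℂ) : Prop :=
  ∀ (θ : ℝ) (X : Matrix ι ι ℂ),
    E (Urep c θ * X * (Urep c θ)ᴴ) = Urep d θ * E X * (Urep d θ)ᴴ

/-- A density operator (quantum state). -/
def IsDensity {ι : Type*} [Fintype ι] (ρ : Matrix ι ι ℂ) : Prop :=
  ρ.PosSemidef ∧ ρ.trace = 1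

/-!
Covariance forces the Choi matrix of `E` to vanish between matrix units whose charge differences
`c a - c b` and `d p - d q` disagree, so `E` sends the mode-`k` component of `ρ` to the mode-`k`
component of `E ρ`, and it remains to show that a CPTP map contracts the trace norm.

For that, write `E X = ∑ Kᵣ X Kᵣᴴ` (from a decomposition of the positive Choi matrix), factor
`A = L Q` with `LᴴL = QᴴQ = |A|`, and choose `W` with `Wᴴ E(A) = |E(A)|` and `W Wᴴ` a projection.
Then `‖E A‖₁ = Re ∑ᵣ tr ((Lᴴ Kᵣᴴ W)ᴴ (Q Kᵣᴴ))`, and Cauchy–Schwarz bounds this by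
`√(tr (W Wᴴ E(L Lᴴ))) · √(tr E|A|) ≤ √(tr (L Lᴴ)) · √(tr |A|) = ‖A‖₁`, by trace preservation.
-/

lemma Real.inv_sqrt_sqrt_mul_mul_inv_sqrt_sqrt (x : ℝ) :
    (√(√x))⁻¹ * x * (√(√x))⁻¹ = √x := by
  calc (√(√x))⁻¹ * x * (√(√x))⁻¹ = x / (√(√x) * √(√x)) := by ring
    _ = √x := by rw [Real.mul_self_sqrt (Real.sqrt_nonneg x), Real.div_sqrt]

section

variable {n : Type*} [Fintype n] [DecidableEq n]

lemma Matrix.PosSemidef.sqrt_eq_cfc {A : Matrix n n ℂ} (hA : A.PosSemidef) :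
    hA.sqrt = cfc Real.sqrt A := by
  rw [hA.1.cfc_eq, IsHermitian.cfc, Unitary.conjStarAlgAut_apply]
  rfl

lemma Matrix.cfc_mul_cfc (f g : ℝ → ℝ) (A : Matrix n n ℂ) :
    cfc f A * cfc g A = cfc (fun x => f x * g x) A :=
  (cfc_mul f g A (A.finite_real_spectrum.continuousOn _)
    (A.finite_real_spectrum.continuousOn _)).symm

lemma Matrix.IsHermitian.mul_cfc {A : Matrix n n ℂ} (hA : A.IsHermitian) (f : ℝ → ℝ) :
    A * cfc f A = cfc (fun x => x * f x) A := by
  rw [← cfc_mul_cfc (fun x => x) f, cfc_id' ℝ A hA.isSelfAdjoint]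

lemma Matrix.IsHermitian.cfc_mul {A : Matrix n n ℂ} (hA : A.IsHermitian) (f : ℝ → ℝ) :
    cfc f A * A = cfc (fun x => f x * x) A := by
  rw [← cfc_mul_cfc f (fun x => x), cfc_id' ℝ A hA.isSelfAdjoint]

lemma Matrix.IsHermitian.cfc_mul_mul_cfc {A : Matrix n n ℂ} (hA : A.IsHermitian) (f g : ℝ → ℝ) :
    cfc f A * A * cfc g A = cfc (fun x => f x * x * g x) A := by
  rw [mul_assoc, hA.mul_cfc, cfc_mul_cfc]
  simp only [mul_assoc]

lemma Matrix.conjTranspose_cfc (f : ℝ → ℝ) (A : Matrix n n ℂ) : (cfc f A)ᴴ = cfc f A :=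
  (cfc_predicate f A).star_eq

lemma Matrix.PosSemidef.cfc_congr {A : Matrix n n ℂ} (hA : A.PosSemidef) {f g : ℝ → ℝ}
    (h : ∀ x, 0 ≤ x → f x = g x) : cfc f A = cfc g A := by
  refine _root_.cfc_congr fun x hx => h x ?_
  rw [hA.1.spectrum_real_eq_range_eigenvalues] at hx
  obtain ⟨i, rfl⟩ := hx
  exact hA.eigenvalues_nonneg i

variable {m : Type*} [Fintype m]

lemma Matrix.mul_cfc_conjTranspose_mul_self (A : Matrix m n ℂ) {f : ℝ → ℝ}
    (hf : ∀ x, 0 < x → f x = 1) : A * cfc f (Aᴴ * A) = A := by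
  have hM := posSemidef_conjTranspose_mul_self A
  have hMF : Aᴴ * A * cfc f (Aᴴ * A) = Aᴴ * A := by
    rw [hM.1.mul_cfc, hM.cfc_congr (g := id) fun x hx => ?_, cfc_id ℝ _ hM.1.isSelfAdjoint]
    rcases hx.eq_or_lt with rfl | hx
    · simp
    · simp [hf x hx]
  have h0 : (A - A * cfc f (Aᴴ * A))ᴴ * (A - A * cfc f (Aᴴ * A)) = 0 := by
    have hfac : A - A * cfc f (Aᴴ * A) = A * (1 - cfc f (Aᴴ * A)) := by
      rw [Matrix.mul_sub, Matrix.mul_one]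
    rw [hfac, conjTranspose_mul, Matrix.mul_assoc, ← Matrix.mul_assoc Aᴴ, Matrix.mul_sub,
      Matrix.mul_one, hMF, sub_self, Matrix.mul_zero]
  exact (sub_eq_zero.mp (conjTranspose_mul_self_eq_zero.mp h0)).symm

/- `L = A |A|^(-1/2)` and `Q = |A|^(1/2)`; on the kernel of `Aᴴ A` the inverse takes the junk
value `0⁻¹ = 0`, which is harmless because `A` vanishes there. -/
lemma Matrix.exists_eq_mul_conjTranspose_mul_self_eq_cfc_sqrt (A : Matrix m n ℂ) :
    ∃ (L : Matrix m n ℂ) (Q : Matrix n n ℂ), A = L * Q ∧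
      Lᴴ * L = cfc Real.sqrt (Aᴴ * A) ∧ Qᴴ * Q = cfc Real.sqrt (Aᴴ * A) := by
  have hM := posSemidef_conjTranspose_mul_self A
  refine ⟨A * cfc (fun x => (√(√x))⁻¹) (Aᴴ * A), cfc (fun x => √(√x)) (Aᴴ * A), ?_, ?_, ?_⟩
  · rw [Matrix.mul_assoc, cfc_mul_cfc, mul_cfc_conjTranspose_mul_self]
    intro x hx
    exact inv_mul_cancel₀ (by positivity)
  · rw [conjTranspose_mul, conjTranspose_cfc, Matrix.mul_assoc, ← Matrix.mul_assoc Aᴴ,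
      ← Matrix.mul_assoc, hM.1.cfc_mul_mul_cfc]
    simp only [Real.inv_sqrt_sqrt_mul_mul_inv_sqrt_sqrt]
  · rw [conjTranspose_cfc, cfc_mul_cfc]
    simp only [Real.mul_self_sqrt (Real.sqrt_nonneg _)]

/- `W` is the partial isometry of the polar decomposition `B = W |B|`. -/
lemma Matrix.exists_conjTranspose_mul_eq_cfc_sqrt (B : Matrix m n ℂ) :
    ∃ W : Matrix m n ℂ, Wᴴ * B = cfc Real.sqrt (Bᴴ * B) ∧ IsStarProjection (W * Wᴴ) := by
  have hN := posSemidef_conjTranspose_mul_self B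
  set W := B * cfc (fun x => (√x)⁻¹) (Bᴴ * B) with hW
  have hWB : Wᴴ * B = cfc Real.sqrt (Bᴴ * B) := by
    rw [hW, conjTranspose_mul, conjTranspose_cfc, Matrix.mul_assoc, hN.1.cfc_mul]
    simp only [inv_mul_eq_div, Real.div_sqrt]
  have hWW : W * (Wᴴ * W) = W := by
    rw [hW, ← Matrix.mul_assoc Wᴴ, hWB, cfc_mul_cfc, Matrix.mul_assoc, cfc_mul_cfc]
    congr 2
    funext x
    simpa only [inv_inv, mul_assoc] using mul_inv_mul_cancel (√x)⁻¹
  refine ⟨W, hWB, ⟨?_, ?_⟩⟩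
  · change W * Wᴴ * (W * Wᴴ) = W * Wᴴ
    rw [← Matrix.mul_assoc, Matrix.mul_assoc W Wᴴ W, hWW]
  · exact isHermitian_mul_conjTranspose_self W

lemma IsStarProjection.re_trace_mul_le {S T : Matrix n n ℂ} (hS : IsStarProjection S)
    (hT : T.PosSemidef) : (S * T).trace.re ≤ T.trace.re := by
  have h := (hT.mul_mul_conjTranspose_same (1 - S)).trace_nonneg
  have : ((1 - S) * T * (1 - S)ᴴ).trace = T.trace - (S * T).trace := by
    rw [← star_eq_conjTranspose, hS.one_sub.isSelfAdjoint.star_eq, trace_mul_cycle,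
      hS.one_sub.isIdempotentElem.eq, Matrix.sub_mul, Matrix.one_mul, trace_sub]
  rw [this] at h
  have := (Complex.nonneg_iff.mp h).1
  simp only [Complex.sub_re] at this
  linarith
end

section

variable {R m n : Type*} [Fintype R] [Fintype m] [Fintype n]

lemma Matrix.sum_trace_conjTranspose_mul (X Y : R → Matrix m n ℂ) :
    ∑ r, ((X r)ᴴ * Y r).trace =
      (fun p : R × m × n => Y p.1 p.2.1 p.2.2) ⬝ᵥ star (fun p => X p.1 p.2.1 p.2.2) := by
  simp only [trace, diag, mul_apply, conjTranspose_apply, dotProduct, Fintype.sum_prod_type,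
    Pi.star_apply, mul_comm (Y _ _ _)]
  exact Finset.sum_congr rfl fun r _ => Finset.sum_comm

lemma Matrix.re_sum_trace_conjTranspose_mul_le (X Y : R → Matrix m n ℂ) :
    (∑ r, ((X r)ᴴ * Y r).trace).re ≤
      √(∑ r, ((X r)ᴴ * X r).trace).re * √(∑ r, ((Y r)ᴴ * Y r).trace).re := by
  simp only [sum_trace_conjTranspose_mul, ← EuclideanSpace.inner_toLp_toLp]
  set x : EuclideanSpace ℂ (R × m × n) := WithLp.toLp 2 fun p => X p.1 p.2.1 p.2.2
  set y : EuclideanSpace ℂ (R × m × n) := WithLp.toLp 2 fun p => Y p.1 p.2.1 p.2.2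
  calc (inner ℂ x y).re ≤ ‖x‖ * ‖y‖ := re_inner_le_norm (𝕜 := ℂ) x y
    _ = _ := by rw [norm_eq_sqrt_re_inner (𝕜 := ℂ) x, norm_eq_sqrt_re_inner (𝕜 := ℂ) y]; rfl
end

section

variable {ι κ R : Type*} [Fintype ι] [DecidableEq ι] [Fintype κ] [DecidableEq κ] [Fintype R]

lemma traceNorm_eq_re_trace_cfc_sqrt (A : Matrix ι ι ℂ) :
    traceNorm A = (cfc Real.sqrt (Aᴴ * A)).trace.re := by
  rw [traceNorm, PosSemidef.sqrt_eq_cfc]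

theorem traceNorm_le_of_kraus (E : Matrix ι ι ℂ →ₗ[ℂ] Matrix κ κ ℂ) (K : R → Matrix κ ι ℂ)
    (hK : ∀ X, E X = ∑ r, K r * X * (K r)ᴴ) (hTP : ∀ X, (E X).trace = X.trace)
    (A : Matrix ι ι ℂ) : traceNorm (E A) ≤ traceNorm A := by
  obtain ⟨L, Q, hA, hL, hQ⟩ := A.exists_eq_mul_conjTranspose_mul_self_eq_cfc_sqrt
  obtain ⟨W, hW, hWW⟩ := (E A).exists_conjTranspose_mul_eq_cfc_sqrt
  rw [traceNorm_eq_re_trace_cfc_sqrt, traceNorm_eq_re_trace_cfc_sqrt, ← hW, ← hQ]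
  have hE_trace (Z : Matrix κ κ ℂ) (X : Matrix ι ι ℂ) :
      ∑ r, (Z * (K r * X * (K r)ᴴ)).trace = (Z * E X).trace := by
    rw [hK, Matrix.mul_sum, trace_sum]
  have h_pair : ∑ r, ((Lᴴ * (K r)ᴴ * W)ᴴ * (Q * (K r)ᴴ)).trace = (Wᴴ * E A).trace := by
    rw [← hE_trace, hA]
    simp only [conjTranspose_mul, conjTranspose_conjTranspose, Matrix.mul_assoc]
  have h_left : ∑ r, ((Lᴴ * (K r)ᴴ * W)ᴴ * (Lᴴ * (K r)ᴴ * W)).trace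
      = (W * Wᴴ * E (L * Lᴴ)).trace := by
    rw [← hE_trace]
    refine Finset.sum_congr rfl fun r _ => ?_
    calc ((Lᴴ * (K r)ᴴ * W)ᴴ * (Lᴴ * (K r)ᴴ * W)).trace
        = (Wᴴ * (K r * (L * Lᴴ) * (K r)ᴴ) * W).trace := by
          simp only [conjTranspose_mul, conjTranspose_conjTranspose, Matrix.mul_assoc]
      _ = (W * Wᴴ * (K r * (L * Lᴴ) * (K r)ᴴ)).trace := by
          rw [trace_mul_comm, Matrix.mul_assoc, Matrix.mul_assoc W]
  have h_right : ∑ r, ((Q * (K r)ᴴ)ᴴ * (Q * (K r)ᴴ)).trace = (E (Qᴴ * Q)).trace := by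
    rw [← one_mul (E _), ← hE_trace]
    simp only [conjTranspose_mul, conjTranspose_conjTranspose, Matrix.mul_assoc, Matrix.one_mul]
  have hEpsd : (E (L * Lᴴ)).PosSemidef := by
    rw [hK]
    exact posSemidef_sum _ fun r _ =>
      (posSemidef_self_mul_conjTranspose L).mul_mul_conjTranspose_same (K r)
  have h_le : (W * Wᴴ * E (L * Lᴴ)).trace.re ≤ (Qᴴ * Q).trace.re := by
    refine (hWW.re_trace_mul_le hEpsd).trans_eq ?_
    rw [hTP, trace_mul_comm, hL, hQ]
  have hCS := re_sum_trace_conjTranspose_mul_le (fun r => Lᴴ * (K r)ᴴ * W) (fun r => Q * (K r)ᴴ)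
  rw [h_pair, h_left, h_right, hTP] at hCS
  calc (Wᴴ * E A).trace.re ≤ √(W * Wᴴ * E (L * Lᴴ)).trace.re * √(Qᴴ * Q).trace.re := hCS
    _ ≤ √(Qᴴ * Q).trace.re * √(Qᴴ * Q).trace.re := by gcongr
    _ = (Qᴴ * Q).trace.re := Real.mul_self_sqrt
      (Complex.nonneg_iff.mp (posSemidef_conjTranspose_mul_self Q).trace_nonneg).1
end

section

variable {ι κ : Type*} [Fintype ι] [DecidableEq ι] [Fintype κ]

lemma apply_eq_sum_choi (E : Matrix ι ι ℂ →ₗ[ℂ] Matrix κ κ ℂ) (X : Matrix ι ι ℂ) (p q : κ) :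
    E X p q = ∑ a, ∑ b, X a b * choi E (a, p) (b, q) := by
  conv_lhs => rw [matrix_eq_sum_single X]
  simp only [map_sum, Matrix.sum_apply]
  refine Finset.sum_congr rfl fun a _ => Finset.sum_congr rfl fun b _ => ?_
  rw [← mul_one (X a b), ← smul_eq_mul, ← smul_single, map_smul, Matrix.smul_apply, smul_eq_mul,
    smul_eq_mul, mul_one]
  rfl

lemma exists_kraus_of_posSemidef_choi (E : Matrix ι ι ℂ →ₗ[ℂ] Matrix κ κ ℂ)
    (hC : (choi E).PosSemidef) :
    ∃ (N : ℕ) (K : Fin N → Matrix κ ι ℂ), ∀ X, E X = ∑ i, K i * X * (K i)ᴴ := by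
  obtain ⟨N, v, hv⟩ := posSemidef_iff_eq_sum_vecMulVec.mp hC
  refine ⟨N, fun i => Matrix.of fun p a => v i (a, p), fun X => ?_⟩
  ext p q
  rw [apply_eq_sum_choi, hv]
  simp only [Matrix.sum_apply, vecMulVec_apply, mul_apply, conjTranspose_apply, of_apply,
    Pi.star_apply, Finset.mul_sum, Finset.sum_mul]
  rw [Finset.sum_congr rfl fun a _ => Finset.sum_comm, Finset.sum_comm]
  refine Finset.sum_congr rfl fun i _ => ?_
  rw [Finset.sum_comm]
  exact Finset.sum_congr rfl fun b _ => Finset.sum_congr rfl fun a _ => by ring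

theorem IsCPTP.traceNorm_map_le [DecidableEq κ] {E : Matrix ι ι ℂ →ₗ[ℂ] Matrix κ κ ℂ}
    (hE : IsCPTP E) (A : Matrix ι ι ℂ) : traceNorm (E A) ≤ traceNorm A := by
  obtain ⟨N, K, hK⟩ := exists_kraus_of_posSemidef_choi E hE.1
  exact traceNorm_le_of_kraus E K hK hE.2 A
end

section

variable {ι κ : Type*} [Fintype ι] [DecidableEq ι] [Fintype κ] [DecidableEq κ]

lemma Urep_mul_mul_conjTranspose_apply (c : ι → ℤ) (θ : ℝ) (X : Matrix ι ι ℂ) (i j : ι) :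
    (Urep c θ * X * (Urep c θ)ᴴ) i j = Complex.exp (I * ((c i - c j : ℤ) : ℂ) * θ) * X i j := by
  simp only [Urep, diagonal_conjTranspose, mul_diagonal, diagonal_mul, Pi.star_apply,
    Complex.star_def, ← Complex.exp_conj]
  rw [mul_right_comm, ← Complex.exp_add]
  congr 2
  simp only [map_mul, Complex.conj_I, Complex.conj_ofReal, map_intCast, Int.cast_sub]
  ring

lemma Int.eq_of_forall_exp_mul_I_eq {n m : ℤ}
    (h : ∀ θ : ℝ, Complex.exp (I * n * θ) = Complex.exp (I * m * θ)) : n = m := by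
  by_contra hnm
  have hnm' : (n : ℂ) - m ≠ 0 := by exact_mod_cast sub_ne_zero.mpr hnm
  set θ : ℝ := Real.pi / (n - m : ℤ)
  have hθ : I * n * θ = I * m * θ + Real.pi * I := by
    simp only [θ]
    push_cast
    field_simp
    ring
  have h1 := h θ
  rw [hθ, Complex.exp_add, Complex.exp_pi_mul_I] at h1
  exact Complex.exp_ne_zero (I * m * θ) (by linear_combination -h1 / 2)

lemma IsCovariant.apply_single_apply_eq_zero {c : ι → ℤ} {d : κ → ℤ}
    {E : Matrix ι ι ℂ →ₗ[ℂ] Matrix κ κ ℂ} (hcov : IsCovariant c d E) {a b : ι} {p q : κ}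
    (h : d p - d q ≠ c a - c b) : E (single a b 1) p q = 0 := by
  by_contra hY
  refine h (Int.eq_of_forall_exp_mul_I_eq fun θ => mul_right_cancel₀ hY ?_)
  have hU : Urep c θ * single a b 1 * (Urep c θ)ᴴ
      = Complex.exp (I * ((c a - c b : ℤ) : ℂ) * θ) • single a b 1 := by
    ext i j
    rw [Urep_mul_mul_conjTranspose_apply, Matrix.smul_apply, smul_eq_mul, single_apply]
    split_ifs with hij
    · rw [hij.1, hij.2]
    · rw [mul_zero, mul_zero]
  have := congr_fun₂ (hcov θ (single a b 1)) p q
  rw [hU, map_smul, Matrix.smul_apply, smul_eq_mul, Urep_mul_mul_conjTranspose_apply] at this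
  exact this.symm

lemma IsCovariant.map_modeComp {c : ι → ℤ} {d : κ → ℤ} {E : Matrix ι ι ℂ →ₗ[ℂ] Matrix κ κ ℂ}
    (hcov : IsCovariant c d E) (k : ℤ) (A : Matrix ι ι ℂ) :
    E (modeComp c k A) = modeComp d k (E A) := by
  ext p q
  have hchoi (a b : ι) (h : d p - d q ≠ c a - c b) : choi E (a, p) (b, q) = 0 :=
    hcov.apply_single_apply_eq_zero h
  simp only [apply_eq_sum_choi E _ p q, modeComp, of_apply]
  split_ifs with hk
  · refine Finset.sum_congr rfl fun a _ => Finset.sum_congr rfl fun b _ => ?_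
    split_ifs with hab
    · rfl
    · rw [hchoi a b (by omega), mul_zero, mul_zero]
  · refine Finset.sum_eq_zero fun a _ => Finset.sum_eq_zero fun b _ => ?_
    split_ifs with hab
    · rw [hchoi a b (by omega), mul_zero]
    · rw [zero_mul]
end

theorem stmt_10_general {ι κ : Type*} [Fintype ι] [DecidableEq ι] [Fintype κ] [DecidableEq κ]
    (c : ι → ℤ) (d : κ → ℤ)
    (E : Matrix ι ι ℂ →ₗ[ℂ] Matrix κ κ ℂ)
    (hCPTP : IsCPTP E) (hcov : IsCovariant c d E)
    (ρ : Matrix ι ι ℂ)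
    (σ : Matrix κ κ ℂ) (hσ : E ρ = σ) (k : ℤ) :
    traceNorm (modeComp d k σ) ≤ traceNorm (modeComp c k ρ) := by
  rw [← hσ, ← hcov.map_modeComp]
  exact hCPTP.traceNorm_map_le _

/-- for each k, `F_k(ρ) = ‖ρ^(k)‖₁` is a U(1)-asymmetry monotone:
if a U(1)-covariant channel maps ρ to σ then `‖σ^(k)‖₁ ≤ ‖ρ^(k)‖₁`. -/
theorem stmt_10 {ι κ : Type*} [Fintype ι] [DecidableEq ι] [Fintype κ] [DecidableEq κ]
    (c : ι → ℤ) (d : κ → ℤ)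
    (E : Matrix ι ι ℂ →ₗ[ℂ] Matrix κ κ ℂ)
    (hCPTP : IsCPTP E) (hcov : IsCovariant c d E)
    (ρ : Matrix ι ι ℂ) (hρ : IsDensity ρ)
    (σ : Matrix κ κ ℂ) (hσ : E ρ = σ) (k : ℤ) :
    traceNorm (modeComp d k σ) ≤ traceNorm (modeComp c k ρ) :=
  stmt_10_general c d E hCPTP hcov ρ σ hσ k
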